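/- Let A = A0 + A1ε ∈ DQ^{p×q} and B = B0 + B1ε ∈ DQ^{p×r} be dual quaternion matrices. Then the dual quaternion matrix equation AX = B has a solution X ∈ DQ^{q×r} if and only if r[A0 B0] = r(A0) and r[A0 B1 A1; 0 B0 A0] = r[A0 A1; 0 A0], where the displayed matrices are block matrices with the indicated quaternion blocks and zero blocks of compatible sizes. -/

import Mathlib

/-!
Writing `X = X0 + X1 ε`, the equation `A X = B` splits into `A0 X0 = B0` and
`A0 X1 + A1 X0 = B1`, i.e. into the quaternion system `[A0 A1; 0 A0] [X1; X0] = [B1; B0]`.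
Over a division ring, `A Y = C` is solvable iff `r [A C] = r A`: the row space of `[A C]`
projects onto that of `A`, and when the dimensions agree this projection is injective, so the
row space of `[A C]` is the graph of a linear map; extended to all row vectors, that map is right
multiplication by a solution `Y`. A column permutation turns `[[A0 A1; 0 A0] [B1; B0]]` into
the block matrix of the statement.
-/

open Matrix

/-- Quaternion matrices of size `p × q`. -/
abbrev QM (p q : ℕ) := Matrix (Fin p) (Fin q) (Quaternion ℝ)

/-- `Ad` is a Moore–Penrose inverse of the quaternion matrix `A`. -/
def IsMP {p q : ℕ} (A : QM p q) (Ad : QM q p) : Prop :=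
  A * Ad * A = A ∧ Ad * A * Ad = Ad ∧ (A * Ad)ᴴ = A * Ad ∧ (Ad * A)ᴴ = Ad * A

/-- The dual quaternion matrix `A0 + A1 ε`, realized as a matrix over the
dual numbers (dual quaternions) `DualNumber (Quaternion ℝ)`. -/
noncomputable def dm {p q : ℕ} (A0 A1 : QM p q) :
    Matrix (Fin p) (Fin q) (DualNumber (Quaternion ℝ)) :=
  A0.map TrivSqZeroExt.inl + A1.map TrivSqZeroExt.inr

/-- The rank of a quaternion matrix: the dimension (over `ℍ`) of the left
`ℍ`-submodule spanned by its rows. -/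
noncomputable def qrank {m n : Type*} (A : Matrix m n (Quaternion ℝ)) : ℕ :=
  Module.finrank (Quaternion ℝ)
    (Submodule.span (Quaternion ℝ) (Set.range (fun i : m => fun j : n => A i j)))

open Module Submodule

section DivisionRing

variable {K : Type*} [DivisionRing K]

theorem exists_linearMap_apply_fst_eq_snd_iff {V W ι : Type*} [AddCommGroup V] [Module K V]
    [AddCommGroup W] [Module K W] [Finite ι] (c : ι → V × W) :
    (∃ ψ : V →ₗ[K] W, ∀ i, ψ (c i).1 = (c i).2) ↔
      finrank K (span K (Set.range c)) = finrank K (span K (Set.range (Prod.fst ∘ c))) := by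
  set T := span K (Set.range c)
  have : FiniteDimensional K T := .span_of_finite K (Set.finite_range c)
  have : FiniteDimensional K (span K (Set.range (Prod.fst ∘ c))) :=
    .span_of_finite K (Set.finite_range _)
  have hproj : T.map (LinearMap.fst K V W) = span K (Set.range (Prod.fst ∘ c)) := by
    rw [map_span, ← Set.range_comp]
    rfl
  constructor
  · rintro ⟨ψ, hψ⟩
    have hgraph : (span K (Set.range (Prod.fst ∘ c))).map (LinearMap.id.prod ψ) = T := by
      rw [map_span, ← Set.range_comp]
      congr
      funext i
      exact Prod.ext rfl (hψ i)
    refine le_antisymm ?_ ?_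
    · rw [← hgraph]
      exact finrank_map_le _ _
    · rw [← hproj]
      exact finrank_map_le _ _
  · intro hrank
    let f := (LinearMap.fst K V W).domRestrict T
    have hrange : LinearMap.range f = span K (Set.range (Prod.fst ∘ c)) := by
      rw [LinearMap.range_domRestrict, hproj]
    have hinj : Function.Injective f := by
      rw [← LinearMap.ker_eq_bot, ← finrank_eq_zero]
      have := f.finrank_range_add_finrank_ker
      rw [hrange, ← hrank] at this
      omega
    let e := LinearEquiv.ofInjective f hinj
    obtain ⟨ψ, hψ⟩ :=
      ((LinearMap.snd K V W).comp (T.subtype.comp e.symm.toLinearMap)).exists_extend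
    refine ⟨ψ, fun i => ?_⟩
    have hci : c i ∈ T := subset_span ⟨i, rfl⟩
    have he : (e ⟨c i, hci⟩ : V) = (c i).1 := rfl
    simpa [he] using LinearMap.congr_fun hψ (e ⟨c i, hci⟩)

theorem Matrix.exists_mul_eq_iff_finrank_span_fromCols_eq {m n n' : Type*} [Finite m]
    [Fintype n] (A : Matrix m n K) (B : Matrix m n' K) :
    (∃ X : Matrix n n' K, A * X = B) ↔
      finrank K (span K (Set.range (fromCols A B).row)) = finrank K (span K (Set.range A.row)) := by
  classical
  have hsolve : (∃ X : Matrix n n' K, A * X = B) ↔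
      ∃ ψ : (n → K) →ₗ[K] n' → K, ∀ i, ψ (A i) = B i :=
    ⟨fun ⟨X, hX⟩ => ⟨X.toLinearMapRight', fun i => by rw [← hX]; rfl⟩,
      fun ⟨ψ, hψ⟩ => ⟨ψ.toMatrixRight', funext fun i => by
        rw [mul_apply_eq_vecMul, ← toLinearMapRight'_apply, LinearEquiv.symm_apply_apply, hψ]⟩⟩
  have hcols : (span K (Set.range (fromCols A B).row)).map
      (LinearEquiv.sumPiEquivProdPi K n n' fun _ => K).toLinearMap =
        span K (Set.range fun i => (A i, B i)) := by
    rw [map_span, ← Set.range_comp]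
    rfl
  rw [hsolve, ← LinearEquiv.finrank_map_eq (LinearEquiv.sumPiEquivProdPi K n n' fun _ => K),
    hcols]
  exact exists_linearMap_apply_fst_eq_snd_iff fun i => (A i, B i)

end DivisionRing

theorem exists_mul_eq_and_mul_add_mul_eq_iff {R m n k : Type*} [Semiring R] [Fintype n]
    (A0 A1 : Matrix m n R) (B0 B1 : Matrix m k R) :
    (∃ X0 X1 : Matrix n k R, A0 * X0 = B0 ∧ A0 * X1 + A1 * X0 = B1) ↔
      ∃ Y : Matrix (n ⊕ n) k R, fromBlocks A0 A1 0 A0 * Y = fromRows B1 B0 := by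
  constructor
  · rintro ⟨X0, X1, h0, h1⟩
    exact ⟨fromRows X1 X0, by simp [fromBlocks_mul_fromRows, h0, h1]⟩
  · rintro ⟨Y, hY⟩
    rw [← fromRows_toRows Y, fromBlocks_mul_fromRows, fromRows_inj.eq_iff] at hY
    exact ⟨Y.toRows₂, Y.toRows₁, by simpa using hY.2, hY.1⟩

local notation "ℍ" => Quaternion ℝ

theorem qrank_submatrix_id {m n n' : Type*} (A : Matrix m n ℍ) (e : n' ≃ n) :
    qrank (A.submatrix id e) = qrank A := by
  have hrows : (Set.range fun i j => A.submatrix id e i j) =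
      (LinearEquiv.funCongrLeft ℍ ℍ e).toLinearMap '' Set.range fun i j => A i j := by
    rw [← Set.range_comp]
    rfl
  rw [qrank, qrank, hrows, ← map_span, LinearEquiv.finrank_map_eq]

theorem exists_mul_eq_iff_qrank_fromCols_eq {m n n' : Type*} [Finite m] [Fintype n]
    (A : Matrix m n ℍ) (B : Matrix m n' ℍ) :
    (∃ X : Matrix n n' ℍ, A * X = B) ↔ qrank (fromCols A B) = qrank A :=
  Matrix.exists_mul_eq_iff_finrank_span_fromCols_eq A B

theorem qrank_fromCols_fromBlocks_fromRows {p q r : ℕ} (A0 A1 : QM p q) (B0 B1 : QM p r) :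
    qrank (fromCols (fromBlocks A0 A1 0 A0) (fromRows B1 B0)) =
      qrank (fromBlocks A0 (fromCols B1 A1) 0 (fromCols B0 A0)) := by
  let e : Fin q ⊕ (Fin r ⊕ Fin q) ≃ (Fin q ⊕ Fin q) ⊕ Fin r :=
    (Equiv.sumCongr (Equiv.refl _) (Equiv.sumComm _ _)).trans (Equiv.sumAssoc _ _ _).symm
  have hperm : fromBlocks A0 (fromCols B1 A1) 0 (fromCols B0 A0) =
      (fromCols (fromBlocks A0 A1 0 A0) (fromRows B1 B0)).submatrix id e := by
    ext (i | i) (j | j | j) <;> rfl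
  rw [hperm, qrank_submatrix_id]

theorem dm_mul {p q r : ℕ} (A0 A1 : QM p q) (X0 X1 : QM q r) :
    dm A0 A1 * dm X0 X1 = dm (A0 * X0) (A0 * X1 + A1 * X0) := by
  refine Matrix.ext fun i j => TrivSqZeroExt.ext ?_ ?_
  · simp [dm, mul_apply, TrivSqZeroExt.fst_sum]
  · simp [dm, mul_apply, TrivSqZeroExt.snd_sum, TrivSqZeroExt.snd_mul,
      Finset.sum_add_distrib, MulOpposite.smul_eq_mul_unop]

theorem dm_inj {p q : ℕ} {A0 A1 B0 B1 : QM p q} : dm A0 A1 = dm B0 B1 ↔ A0 = B0 ∧ A1 = B1 := by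
  refine ⟨fun h => ⟨?_, ?_⟩, fun ⟨h0, h1⟩ => h0 ▸ h1 ▸ rfl⟩ <;>
    refine Matrix.ext fun i j => ?_
  · simpa [dm] using congrArg TrivSqZeroExt.fst (congrFun₂ h i j)
  · simpa [dm] using congrArg TrivSqZeroExt.snd (congrFun₂ h i j)

theorem dm_surjective {p q : ℕ} (X : Matrix (Fin p) (Fin q) (DualNumber ℍ)) :
    ∃ X0 X1 : QM p q, dm X0 X1 = X :=
  ⟨X.map TrivSqZeroExt.fst, X.map TrivSqZeroExt.snd,
    Matrix.ext fun i j => TrivSqZeroExt.inl_fst_add_inr_snd_eq (X i j)⟩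

theorem exists_dm_mul_eq_iff {p q r : ℕ} (A0 A1 : QM p q) (B0 B1 : QM p r) :
    (∃ X : Matrix (Fin q) (Fin r) (DualNumber ℍ), dm A0 A1 * X = dm B0 B1) ↔
      ∃ X0 X1 : QM q r, A0 * X0 = B0 ∧ A0 * X1 + A1 * X0 = B1 := by
  constructor
  · rintro ⟨X, hX⟩
    obtain ⟨X0, X1, rfl⟩ := dm_surjective X
    exact ⟨X0, X1, dm_inj.mp (dm_mul A0 A1 X0 X1 ▸ hX)⟩
  · rintro ⟨X0, X1, h0, h1⟩
    exact ⟨dm X0 X1, by rw [dm_mul, h0, h1]⟩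

/-- solvability of the dual quaternion matrix equation `A X = B`
in terms of rank equalities. -/
theorem stmt8 {p q r : ℕ}
    (A0 A1 : QM p q) (B0 B1 : QM p r) :
    (∃ X : Matrix (Fin q) (Fin r) (DualNumber (Quaternion ℝ)),
        dm A0 A1 * X = dm B0 B1) ↔
      (qrank (fromCols A0 B0) = qrank A0 ∧
       qrank (fromBlocks A0 (fromCols B1 A1) 0 (fromCols B0 A0)) =
         qrank (fromBlocks A0 A1 0 A0)) := by
  rw [exists_dm_mul_eq_iff, ← exists_mul_eq_iff_qrank_fromCols_eq,
    ← qrank_fromCols_fromBlocks_fromRows, ← exists_mul_eq_iff_qrank_fromCols_eq,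
    ← exists_mul_eq_and_mul_add_mul_eq_iff]
  exact ⟨fun ⟨X0, X1, h0, h1⟩ => ⟨⟨X0, h0⟩, X0, X1, h0, h1⟩, fun ⟨_, h⟩ => h⟩
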